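/- arXiv:2601.07452 — 2 statements merged into one kernel-verified Lean document; each statement's English description precedes it below -/
import Mathlib

section
/- For every k ∈ {1,…,K}, the set X_k of markets for which price v_k is optimal is equal to the convex hull of the finite set {x^S : S ⊆ {1,…,K}, k ∈ S}. -/
open Finset

/-- A market: a probability vector over the `K` valuations. -/
def IsMarket (K : ℕ) (x : Fin K → ℝ) : Prop :=
  (∀ j, 0 ≤ x j) ∧ ∑ j, x j = 1

/-- Revenue from charging price `v k` in market `x`. -/
def rev {K : ℕ} (v x : Fin K → ℝ) (k : Fin K) : ℝ :=
  v k * ∑ j ∈ Finset.Ici k, x j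

/-- Price `v k` is optimal for market `x`. -/
def OptPrice {K : ℕ} (v x : Fin K → ℝ) (k : Fin K) : Prop :=
  ∀ i, rev v x i ≤ rev v x k

/-- A segmentation of the aggregate market `xstar`: a finitely supported probability
distribution on markets averaging to `xstar`. -/
def IsSegmentation {K : ℕ} (xstar : Fin K → ℝ) (σ : (Fin K → ℝ) →₀ ℝ) : Prop :=
  (∀ x, 0 ≤ σ x) ∧ (∑ x ∈ σ.support, σ x = 1) ∧
  (∀ x ∈ σ.support, IsMarket K x) ∧
  (∑ x ∈ σ.support, σ x • x = xstar)

/-- A pricing rule assigns a probability vector over prices to each market in the support. -/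
def IsPricingRule {K : ℕ} (σ : (Fin K → ℝ) →₀ ℝ) (φ : (Fin K → ℝ) → Fin K → ℝ) : Prop :=
  ∀ x ∈ σ.support, (∀ k, 0 ≤ φ x k) ∧ ∑ k, φ x k = 1

/-- A pricing rule is optimal if it only charges optimal prices. -/
def IsOptimalPricing {K : ℕ} (v : Fin K → ℝ) (σ : (Fin K → ℝ) →₀ ℝ)
    (φ : (Fin K → ℝ) → Fin K → ℝ) : Prop :=
  ∀ x ∈ σ.support, ∀ k, 0 < φ x k → OptPrice v x k

/-- Consumer surplus of a segmentation and pricing rule. -/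
def consumerSurplus {K : ℕ} (v : Fin K → ℝ) (σ : (Fin K → ℝ) →₀ ℝ)
    (φ : (Fin K → ℝ) → Fin K → ℝ) : ℝ :=
  ∑ x ∈ σ.support, σ x * ∑ k, φ x k * ∑ j ∈ Finset.Ici k, (v j - v k) * x j

/-- Producer surplus of a segmentation and pricing rule. -/
def producerSurplus {K : ℕ} (v : Fin K → ℝ) (σ : (Fin K → ℝ) →₀ ℝ)
    (φ : (Fin K → ℝ) → Fin K → ℝ) : ℝ :=
  ∑ x ∈ σ.support, σ x * ∑ k, φ x k * (v k * ∑ j ∈ Finset.Ici k, x j)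

/-- A direct segmentation: markets `xs k` for `k ∈ A`, pairwise distinct, with
`xs k ∈ X_k`, weights `w k > 0` summing to one and averaging to `xstar`. -/
def IsDirectSeg {K : ℕ} (v xstar : Fin K → ℝ) (A : Finset (Fin K))
    (xs : Fin K → Fin K → ℝ) (w : Fin K → ℝ) : Prop :=
  Set.InjOn xs (A : Set (Fin K)) ∧
  (∀ k ∈ A, IsMarket K (xs k)) ∧
  (∀ k ∈ A, OptPrice v (xs k) k) ∧
  (∀ k ∈ A, 0 < w k) ∧
  (∑ k ∈ A, w k = 1) ∧
  (∑ k ∈ A, w k • xs k = xstar)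

/-- Consumer surplus of a direct segmentation (with its direct pricing rule). -/
def directCS {K : ℕ} (v : Fin K → ℝ) (A : Finset (Fin K))
    (xs : Fin K → Fin K → ℝ) (w : Fin K → ℝ) : ℝ :=
  ∑ k ∈ A, w k * ∑ j ∈ Finset.Ici k, (v j - v k) * xs k j

/-- Producer surplus of a direct segmentation (with its direct pricing rule). -/
def directPS {K : ℕ} (v : Fin K → ℝ) (A : Finset (Fin K))
    (xs : Fin K → Fin K → ℝ) (w : Fin K → ℝ) : ℝ :=
  ∑ k ∈ A, w k * (v k * ∑ j ∈ Finset.Ici k, xs k j)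

/-- `x` is the characteristic market `x^S`: supported in `S`, and every price in `S`
yields the same revenue. -/
def IsCharMarket {K : ℕ} (v : Fin K → ℝ) (S : Finset (Fin K)) (x : Fin K → ℝ) : Prop :=
  IsMarket K x ∧ (∀ j ∉ S, x j = 0) ∧ ∀ i ∈ S, ∀ i' ∈ S, rev v x i = rev v x i'

/-- The joint distribution over valuations and prices induced by `(σ, φ)`:
mass of the pair `(v j, v k)`. -/
def jointDist {K : ℕ} (σ : (Fin K → ℝ) →₀ ℝ) (φ : (Fin K → ℝ) → Fin K → ℝ)
    (j k : Fin K) : ℝ :=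
  ∑ x ∈ σ.support, σ x * φ x k * x j

/-- The joint distribution over valuations and prices induced by a direct segmentation
with its direct pricing rule. -/
def directJoint {K : ℕ} (A : Finset (Fin K)) (xs : Fin K → Fin K → ℝ) (w : Fin K → ℝ)
    (j k : Fin K) : ℝ :=
  if k ∈ A then w k * xs k j else 0

/-- The total mass `m_k` of price `v k` under `(σ, φ)`. -/
noncomputable def mass {K : ℕ} (σ : (Fin K → ℝ) →₀ ℝ) (φ : (Fin K → ℝ) → Fin K → ℝ)
    (k : Fin K) : ℝ :=
  ∑ x ∈ σ.support, σ x * φ x k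

/-- The conditional market `x^k` given price `v k` under `(σ, φ)`. -/
noncomputable def condMarket {K : ℕ} (σ : (Fin K → ℝ) →₀ ℝ) (φ : (Fin K → ℝ) → Fin K → ℝ)
    (k : Fin K) : Fin K → ℝ :=
  (mass σ φ k)⁻¹ • ∑ x ∈ σ.support, (σ x * φ x k) • x

/-! The set `X_k` is a compact convex polytope cut out of the simplex by the linear inequalities
`rev v x i ≤ rev v x k`, so by Krein–Milman it is the convex hull of its extreme points. If `x ∈ X_k`
has tie set `S = {i | rev v x i = rev v x k}`, then `x` is positive on `S`, and moving `x` a little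
in either direction along `x - x^S` keeps every binding constraint binding and every slack one
slack. Hence an extreme point of `X_k` equals `x^S`, and conversely each `x^S` with `k ∈ S` lies
in `X_k`. -/

open Filter Topology

theorem Convex.eq_convexHull_of_extremePoints_subset {E : Type*} [AddCommGroup E] [Module ℝ E]
    [TopologicalSpace E] [T2Space E] [IsTopologicalAddGroup E] [ContinuousSMul ℝ E]
    [LocallyConvexSpace ℝ E] {s t : Set E} (hs : Convex ℝ s) (hsc : IsCompact s)
    (ht : t.Finite) (hext : s.extremePoints ℝ ⊆ t) (hts : t ⊆ s) :
    s = convexHull ℝ t := by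
  refine (convexHull_min hts hs).antisymm' ?_
  calc s = closure (convexHull ℝ (s.extremePoints ℝ)) :=
        (closure_convexHull_extremePoints hsc hs).symm
    _ ⊆ closure (convexHull ℝ t) := closure_mono (convexHull_mono hext)
    _ = convexHull ℝ t := (ht.isClosed_convexHull (𝕜 := ℝ)).closure_eq

theorem notMem_extremePoints_of_eventually_add_smul_mem {E : Type*} [AddCommGroup E]
    [Module ℝ E] {s : Set E} {x d : E} (hd : d ≠ 0)
    (h : ∀ᶠ t in 𝓝 (0 : ℝ), x + t • d ∈ s) : x ∉ s.extremePoints ℝ := by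
  obtain ⟨ε, hε, hball⟩ := Metric.eventually_nhds_iff.1 h
  have hmem : ∀ t : ℝ, |t| < ε → x + t • d ∈ s := fun t ht => hball (by simpa using ht)
  intro hx
  have hε2 : |ε / 2| < ε := by rw [abs_of_pos (half_pos hε)]; linarith
  have hseg : x ∈ openSegment ℝ (x + (-(ε / 2)) • d) (x + (ε / 2) • d) :=
    ⟨1 / 2, 1 / 2, by norm_num, by norm_num, by norm_num, by module⟩
  have hxeq := hx.2 (hmem _ (by rwa [abs_neg])) (hmem _ hε2) hseg
  rw [add_eq_left, smul_eq_zero] at hxeq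
  exact hd (hxeq.resolve_left (neg_ne_zero.2 (half_pos hε).ne'))

theorem Finset.sum_Ici_eq_sum_Ici_of_eq_zero {α M : Type*} [LinearOrder α]
    [LocallyFiniteOrderTop α] [AddCommMonoid M] {f : α → M} {a b : α} (hab : a ≤ b)
    (hf : ∀ j, a ≤ j → j < b → f j = 0) :
    ∑ j ∈ Ici a, f j = ∑ j ∈ Ici b, f j := by
  refine (sum_subset (Ici_subset_Ici.2 hab) fun j hja hjb => ?_).symm
  exact hf j (mem_Ici.1 hja) (not_le.1 (mem_Ici.not.1 hjb))

section Revenue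

variable {K : ℕ} {v : Fin K → ℝ}

/-- The set `X_k`. -/
def optMarkets (v : Fin K → ℝ) (k : Fin K) : Set (Fin K → ℝ) :=
  {x | IsMarket K x ∧ OptPrice v x k}

noncomputable def revTies (v x : Fin K → ℝ) (k : Fin K) : Finset (Fin K) :=
  {i | rev v x i = rev v x k}

theorem rev_add (v x y : Fin K → ℝ) (i : Fin K) : rev v (x + y) i = rev v x i + rev v y i := by
  simp only [rev, Pi.add_apply, sum_add_distrib, mul_add]

theorem rev_smul (v x : Fin K → ℝ) (c : ℝ) (i : Fin K) : rev v (c • x) i = c * rev v x i := by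
  simp only [rev, Pi.smul_apply, smul_eq_mul, ← mul_sum]
  ring

theorem rev_sub (v x y : Fin K → ℝ) (i : Fin K) : rev v (x - y) i = rev v x i - rev v y i := by
  simp only [rev, Pi.sub_apply, sum_sub_distrib, mul_sub]

theorem continuous_rev (v : Fin K → ℝ) (i : Fin K) : Continuous fun x => rev v x i := by
  unfold rev
  fun_prop

theorem optMarkets_eq (v : Fin K → ℝ) (k : Fin K) :
    optMarkets v k = stdSimplex ℝ (Fin K) ∩ ⋂ i, {x | rev v x i ≤ rev v x k} := by
  ext x
  simp [optMarkets, IsMarket, OptPrice, stdSimplex]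

theorem convex_optMarkets (v : Fin K → ℝ) (k : Fin K) : Convex ℝ (optMarkets v k) := by
  rw [optMarkets_eq]
  refine (convex_stdSimplex ℝ _).inter (convex_iInter fun i => ?_)
  intro x hx y hy a b ha hb _
  simp only [Set.mem_ofPred_eq, rev_add, rev_smul] at hx hy ⊢
  gcongr

theorem isCompact_optMarkets (v : Fin K → ℝ) (k : Fin K) : IsCompact (optMarkets v k) := by
  rw [optMarkets_eq]
  exact (isCompact_stdSimplex ℝ (Fin K)).inter_right
    (isClosed_iInter fun i => isClosed_le (continuous_rev v i) (continuous_rev v k))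

theorem rev_le_rev_of_eq_zero (hv : Monotone v) {x : Fin K → ℝ} (hx : ∀ j, 0 ≤ x j)
    {i i' : Fin K} (hii' : i ≤ i') (hz : ∀ j, i ≤ j → j < i' → x j = 0) :
    rev v x i ≤ rev v x i' := by
  rw [rev, rev, sum_Ici_eq_sum_Ici_of_eq_zero hii' hz]
  exact mul_le_mul_of_nonneg_right (hv hii') (sum_nonneg fun j _ => hx j)

theorem rev_lt_rev_of_eq_zero (hv : StrictMono v) {x : Fin K → ℝ}
    {i i' : Fin K} (hpos : 0 < ∑ j ∈ Ici i, x j) (hii' : i < i')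
    (hz : ∀ j, i ≤ j → j < i' → x j = 0) :
    rev v x i < rev v x i' := by
  rw [rev, rev, ← sum_Ici_eq_sum_Ici_of_eq_zero hii'.le hz]
  exact mul_lt_mul_of_pos_right (hv hii') hpos

theorem IsCharMarket.optPrice (hv0 : ∀ k, 0 < v k) (hv : StrictMono v) {S : Finset (Fin K)}
    {g : Fin K → ℝ} (hg : IsCharMarket v S g) {k : Fin K} (hk : k ∈ S) :
    OptPrice v g k := by
  classical
  obtain ⟨⟨hg0, -⟩, hsupp, heq⟩ := hg
  intro i
  by_cases hS : {j ∈ S | i ≤ j}.Nonempty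
  · -- compare with the first price of `S` above `i`: nobody buys strictly between them
    have hmin := mem_filter.1 ({j ∈ S | i ≤ j}.min'_mem hS)
    refine (rev_le_rev_of_eq_zero hv.monotone hg0 hmin.2 fun j hij hj => ?_).trans_eq
      (heq _ hmin.1 k hk)
    exact hsupp j fun hjS => (min'_le _ j (mem_filter.2 ⟨hjS, hij⟩)).not_gt hj
  · have hzero : ∑ j ∈ Ici i, g j = 0 :=
      sum_eq_zero fun j hj => hsupp j fun hjS => hS ⟨j, mem_filter.2 ⟨hjS, mem_Ici.1 hj⟩⟩
    rw [rev, hzero, mul_zero]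
    exact mul_nonneg (hv0 k).le (sum_nonneg fun j _ => hg0 j)

theorem pos_of_optPrice (hv0 : ∀ k, 0 < v k) (hv : StrictMono v) {x : Fin K → ℝ}
    (hx : IsMarket K x) {i : Fin K} (hi : OptPrice v x i) : 0 < x i := by
  obtain ⟨hx0, hx1⟩ := hx
  refine (hx0 i).lt_of_ne' fun hxi => ?_
  obtain ⟨j₀, -, hj₀⟩ : ∃ j ∈ univ, (0 : ℝ) < x j :=
    exists_lt_of_sum_lt (by simp [hx1])
  have hrev : 0 < rev v x i :=
    calc 0 < v j₀ * x j₀ := mul_pos (hv0 j₀) hj₀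
      _ ≤ rev v x j₀ := mul_le_mul_of_nonneg_left
          (single_le_sum (fun j _ => hx0 j) (mem_Ici.2 le_rfl)) (hv0 j₀).le
      _ ≤ rev v x i := hi j₀
  have hsum : 0 < ∑ j ∈ Ici i, x j := pos_of_mul_pos_right hrev (hv0 i).le
  -- nobody buys at `v i`, so the next price bought at sells to the same consumers for more
  obtain ⟨j, hjmem, hj⟩ : ∃ j ∈ Ici i, 0 < x j :=
    exists_lt_of_sum_lt (by simpa using hsum)
  have hP : {j ∈ Ici i | 0 < x j}.Nonempty := ⟨j, mem_filter.2 ⟨hjmem, hj⟩⟩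
  have hmin := mem_filter.1 ({j ∈ Ici i | 0 < x j}.min'_mem hP)
  have hlt : i < {j ∈ Ici i | 0 < x j}.min' hP :=
    (mem_Ici.1 hmin.1).lt_of_ne fun h => hmin.2.ne' (h ▸ hxi)
  refine (rev_lt_rev_of_eq_zero hv hsum hlt fun l hil hl => ?_).not_ge (hi _)
  refine (hx0 l).antisymm' (not_lt.1 fun hxl => ?_)
  exact (min'_le _ l (mem_filter.2 ⟨mem_Ici.2 hil, hxl⟩)).not_gt hl

@[simp]
theorem mem_revTies {x : Fin K → ℝ} {k i : Fin K} :
    i ∈ revTies v x k ↔ rev v x i = rev v x k := by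
  simp [revTies]

theorem self_mem_revTies (v x : Fin K → ℝ) (k : Fin K) : k ∈ revTies v x k :=
  mem_revTies.2 rfl

theorem OptPrice.of_mem_revTies {x : Fin K → ℝ} {k i : Fin K} (hk : OptPrice v x k)
    (hi : i ∈ revTies v x k) : OptPrice v x i := fun j =>
  (hk j).trans_eq (mem_revTies.1 hi).symm

theorem eventually_add_smul_sub_mem_optMarkets (hv0 : ∀ k, 0 < v k) (hv : StrictMono v)
    {k : Fin K} {x g : Fin K → ℝ} (hx : x ∈ optMarkets v k)
    (hg : IsCharMarket v (revTies v x k) g) :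
    ∀ᶠ t in 𝓝 (0 : ℝ), x + t • (x - g) ∈ optMarkets v k := by
  obtain ⟨⟨hx0, hx1⟩, hxk⟩ := hx
  obtain ⟨⟨-, hg1⟩, hgsupp, hgeq⟩ := hg
  have hnonneg : ∀ j, ∀ᶠ t in 𝓝 (0 : ℝ), 0 ≤ (x + t • (x - g)) j := by
    intro j
    rcases (hx0 j).eq_or_lt with hxj | hxj
    · -- `x j = 0` rules out `j` as an optimal price, so `g j = 0` too
      have hgj : g j = 0 := hgsupp j fun hj =>
        (pos_of_optPrice hv0 hv ⟨hx0, hx1⟩ (hxk.of_mem_revTies hj)).ne' hxj.symm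
      exact Eventually.of_forall fun t => (by simp [← hxj, hgj] : 0 ≤ (x + t • (x - g)) j)
    · exact (ContinuousAt.eventually_lt continuousAt_const (by fun_prop) (by simpa using hxj)).mono
        fun _ => le_of_lt
  have hrev : ∀ i, ∀ᶠ t in 𝓝 (0 : ℝ),
      rev v (x + t • (x - g)) i ≤ rev v (x + t • (x - g)) k := by
    intro i
    simp only [rev_add, rev_smul, rev_sub]
    rcases (hxk i).eq_or_lt with hi | hi
    · have hgi := hgeq i (mem_revTies.2 hi) k (self_mem_revTies v x k)
      exact Eventually.of_forall fun t => by rw [hi, hgi]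
    · exact (ContinuousAt.eventually_lt (by fun_prop) (by fun_prop) (by simpa using hi)).mono
        fun _ => le_of_lt
  have hsum : ∀ t : ℝ, ∑ j, (x + t • (x - g)) j = 1 := fun t => by
    simp [sum_add_distrib, ← mul_sum, sum_sub_distrib, hx1, hg1]
  filter_upwards [eventually_all.2 hnonneg, eventually_all.2 hrev] with t h0 hr
  exact ⟨⟨h0, hsum t⟩, hr⟩

theorem eq_of_mem_extremePoints_optMarkets (hv0 : ∀ k, 0 < v k) (hv : StrictMono v)
    {k : Fin K} {x g : Fin K → ℝ} (hx : x ∈ (optMarkets v k).extremePoints ℝ)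
    (hg : IsCharMarket v (revTies v x k) g) : x = g := by
  by_contra hne
  exact notMem_extremePoints_of_eventually_add_smul_mem (sub_ne_zero.2 hne)
    (eventually_add_smul_sub_mem_optMarkets hv0 hv hx.1 hg) hx

end Revenue

theorem stmt3_general {K : ℕ} (v : Fin K → ℝ)
    (hv0 : ∀ k, 0 < v k) (hv : StrictMono v)
    (xS : Finset (Fin K) → Fin K → ℝ)
    (hxS : ∀ S : Finset (Fin K), S.Nonempty → IsCharMarket v S (xS S))
    (k : Fin K) :
    {x : Fin K → ℝ | IsMarket K x ∧ OptPrice v x k}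
      = convexHull ℝ (xS '' {S : Finset (Fin K) | k ∈ S}) := by
  refine (convex_optMarkets v k).eq_convexHull_of_extremePoints_subset
    (isCompact_optMarkets v k) ((Set.toFinite _).image xS) ?_ ?_
  · intro x hx
    have hk := self_mem_revTies v x k
    exact ⟨revTies v x k, hk, (eq_of_mem_extremePoints_optMarkets hv0 hv hx (hxS _ ⟨k, hk⟩)).symm⟩
  · rintro _ ⟨S, hk, rfl⟩
    have hg := hxS S ⟨k, hk⟩
    exact ⟨hg.1, hg.optPrice hv0 hv hk⟩

theorem stmt3 {K : ℕ} (hK : 2 ≤ K) (v : Fin K → ℝ)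
    (hv0 : ∀ k, 0 < v k) (hv : StrictMono v)
    (xS : Finset (Fin K) → Fin K → ℝ)
    (hxS : ∀ S : Finset (Fin K), S.Nonempty → IsCharMarket v S (xS S))
    (k : Fin K) :
    {x : Fin K → ℝ | IsMarket K x ∧ OptPrice v x k}
      = convexHull ℝ (xS '' {S : Finset (Fin K) | k ∈ S}) :=
  stmt3_general v hv0 hv xS hxS k
end

section
/- Suppose x* = x^V. If a direct segmentation (with its direct pricing rule) achieves producer surplus π = π*, then its consumer surplus u satisfies u = ∑_{j=k}^K (v_j − v_k) x*_j for some k ∈ {1,…,K}. -/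
open Finset

/-!
Since `x* = x^V`, every price earns `π*` on the aggregate market. The aggregate revenue of a
fixed price is the `w`-average of the segment revenues at that price, each bounded by the
segment's revenue at its own optimal price, whose average is the producer surplus `π*`. So
every price is optimal in every segment. But `x^V` is the only market in which all prices are
optimal (the lowest price earns `v₁`, which then fixes every tail sum), hence every segment is
`x*`, and distinctness of the segments leaves just one.
-/

lemma eq_of_sum_Ici_eq {α M : Type*} [PartialOrder α] [LocallyFiniteOrderTop α]
    [WellFoundedGT α] [AddCancelCommMonoid M] {x y : α → M}
    (h : ∀ i, ∑ j ∈ Ici i, x j = ∑ j ∈ Ici i, y j) : x = y := by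
  funext i
  induction i using WellFoundedGT.induction with
  | _ i ih =>
    have htail : ∑ j ∈ Ioi i, x j = ∑ j ∈ Ioi i, y j :=
      sum_congr rfl fun j hj => ih j (mem_Ioi.mp hj)
    have hi := h i
    rw [← add_sum_Ioi_eq_sum_Ici, ← add_sum_Ioi_eq_sum_Ici, htail] at hi
    exact add_right_cancel hi

section Revenue

variable {K : ℕ} (v : Fin K → ℝ)

lemma rev_sum_smul (A : Finset (Fin K)) (xs : Fin K → Fin K → ℝ) (w : Fin K → ℝ) (i : Fin K) :
    rev v (∑ k ∈ A, w k • xs k) i = ∑ k ∈ A, w k * rev v (xs k) i := by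
  simp only [rev, Finset.sum_apply, Pi.smul_apply, smul_eq_mul, mul_sum]
  rw [sum_comm]
  exact sum_congr rfl fun _ _ => sum_congr rfl fun _ _ => by ring

lemma rev_eq_of_forall_le {x : Fin K → ℝ} (hx : ∑ j, x j = 1) {i : Fin K}
    (hi : ∀ j, i ≤ j) : rev v x i = v i := by
  rw [rev, eq_univ_of_forall fun j => mem_Ici.mpr (hi j), hx, mul_one]

lemma eq_of_forall_rev_eq {x y : Fin K → ℝ} (hv : ∀ k, v k ≠ 0)
    (hx : ∑ j, x j = 1) (hy : ∑ j, y j = 1)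
    (hxc : ∀ i i', rev v x i = rev v x i') (hyc : ∀ i i', rev v y i = rev v y i') :
    x = y := by
  refine eq_of_sum_Ici_eq fun i => mul_left_cancel₀ (hv i) ?_
  let i₀ : Fin K := ⟨0, i.pos⟩
  have hi₀ : ∀ j, i₀ ≤ j := fun j => Fin.le_def.mpr (Nat.zero_le j)
  calc rev v x i = v i₀ := by rw [hxc i i₀, rev_eq_of_forall_le v hx hi₀]
    _ = rev v y i := by rw [hyc i i₀, rev_eq_of_forall_le v hy hi₀]

end Revenue

namespace IsDirectSeg

variable {K : ℕ} {v xstar : Fin K → ℝ} {A : Finset (Fin K)} {xs : Fin K → Fin K → ℝ}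
  {w : Fin K → ℝ}

lemma rev_eq_of_directPS_eq (hd : IsDirectSeg v xstar A xs w) {π : ℝ}
    (hconst : ∀ i, rev v xstar i = π) (hps : directPS v A xs w = π) :
    ∀ k ∈ A, ∀ i, rev v (xs k) i = rev v (xs k) k := by
  obtain ⟨-, -, hopt, hwpos, -, havg⟩ := hd
  intro k hk i
  have hle : ∀ k' ∈ A, w k' * rev v (xs k') i ≤ w k' * rev v (xs k') k' :=
    fun k' hk' => mul_le_mul_of_nonneg_left (hopt k' hk' i) (hwpos k' hk').le
  have hsum : ∑ k' ∈ A, w k' * rev v (xs k') i = ∑ k' ∈ A, w k' * rev v (xs k') k' := by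
    rw [← rev_sum_smul, havg, hconst]
    exact hps.symm
  exact mul_left_cancel₀ (hwpos k hk).ne' ((sum_eq_sum_iff_of_le hle).mp hsum k hk)

lemma exists_eq_singleton (hd : IsDirectSeg v xstar A xs w) (hxs : ∀ k ∈ A, xs k = xstar) :
    ∃ k, A = {k} ∧ w k = 1 := by
  obtain ⟨hinj, -, -, -, hwsum, -⟩ := hd
  obtain ⟨k, hk⟩ : A.Nonempty := nonempty_of_sum_ne_zero (by rw [hwsum]; exact one_ne_zero)
  have hA : A = {k} := eq_singleton_iff_unique_mem.mpr
    ⟨hk, fun k' hk' => hinj hk' hk ((hxs k' hk').trans (hxs k hk).symm)⟩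
  exact ⟨k, hA, by rwa [hA, sum_singleton] at hwsum⟩

end IsDirectSeg

theorem stmt5_general {K : ℕ} (v : Fin K → ℝ)
    (hv0 : ∀ k, 0 < v k)
    (xstar : Fin K → ℝ) (hxstar : IsMarket K xstar)
    (πstar : ℝ) (hπ : IsGreatest (Set.range (rev v xstar)) πstar)
    (hchar : IsCharMarket v Finset.univ xstar)
    (A : Finset (Fin K)) (xs : Fin K → Fin K → ℝ) (w : Fin K → ℝ)
    (hd : IsDirectSeg v xstar A xs w) (hps : directPS v A xs w = πstar) :
    ∃ k : Fin K, directCS v A xs w = ∑ j ∈ Finset.Ici k, (v j - v k) * xstar j := by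
  have hrev : ∀ i i', rev v xstar i = rev v xstar i' :=
    fun i i' => hchar.2.2 i (mem_univ i) i' (mem_univ i')
  obtain ⟨⟨i₁, hi₁⟩, -⟩ := hπ
  have hseg := hd.rev_eq_of_directPS_eq (fun i => (hrev i i₁).trans hi₁) hps
  have hxs : ∀ k ∈ A, xs k = xstar := fun k hk =>
    eq_of_forall_rev_eq v (fun i => (hv0 i).ne') (hd.2.1 k hk).2 hxstar.2
      (fun i i' => (hseg k hk i).trans (hseg k hk i').symm) hrev
  obtain ⟨k, rfl, hw⟩ := hd.exists_eq_singleton hxs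
  exact ⟨k, by rw [directCS, sum_singleton, hw, one_mul, hxs k (mem_singleton_self k)]⟩

theorem stmt5 {K : ℕ} (hK : 2 ≤ K) (v : Fin K → ℝ)
    (hv0 : ∀ k, 0 < v k) (hv : StrictMono v)
    (xstar : Fin K → ℝ) (hxstar : IsMarket K xstar) (hxpos : ∀ k, 0 < xstar k)
    (πstar : ℝ) (hπ : IsGreatest (Set.range (rev v xstar)) πstar)
    (hchar : IsCharMarket v Finset.univ xstar)
    (A : Finset (Fin K)) (xs : Fin K → Fin K → ℝ) (w : Fin K → ℝ)
    (hd : IsDirectSeg v xstar A xs w) (hps : directPS v A xs w = πstar) :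
    ∃ k : Fin K, directCS v A xs w = ∑ j ∈ Finset.Ici k, (v j - v k) * xstar j :=
  stmt5_general v hv0 xstar hxstar πstar hπ hchar A xs w hd hps
end
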